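/- Let G = PSL₂(ℂ) and X = (ℂ² \ {0})/± with the quandle operation (a,b) ◁ (c,d) = (a,b)·[[1+cd, d²],[−c², 1−cd]]. Then X is isomorphic as a quandle to the coset quandle K\G with operation [Kx] ◁ [Ky] = [K x y⁻¹ k y], where K is the upper unipotent subgroup {[[1,a],[0,1]] : a ∈ ℂ} and k = [[1,1],[0,1]], via the map sending K·g to the class of (0,1)·g. -/

import Mathlib

open Matrix

/-- The operation `(a,b) ◁ (c,d) = (a,b)·[[1+cd, d²],[−c², 1−cd]]` on `ℂ²`. -/
def stmt2Op (v w : ℂ × ℂ) : ℂ × ℂ :=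
  (v.1 * (1 + w.1 * w.2) - v.2 * w.1 ^ 2, v.1 * w.2 ^ 2 + v.2 * (1 - w.1 * w.2))

/-- The relation identifying `v` with `−v` on `ℂ² \ {0}`. -/
def stmt2Rel (v w : {p : ℂ × ℂ // p ≠ 0}) : Prop := (w : ℂ × ℂ) = -(v : ℂ × ℂ)

/-- Right action of a 2×2 matrix on a row vector. -/
def rowAct (v : ℂ × ℂ) (M : Matrix (Fin 2) (Fin 2) ℂ) : ℂ × ℂ :=
  (v.1 * M 0 0 + v.2 * M 1 0, v.1 * M 0 1 + v.2 * M 1 1)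

/-- The upper unipotent matrix `[[1,a],[0,1]]` in `SL(2,ℂ)`. -/
def uni (a : ℂ) : Matrix.SpecialLinearGroup (Fin 2) ℂ :=
  ⟨!![1, a; 0, 1], by simp [Matrix.det_fin_two_of]⟩

/-- `PSL₂(ℂ) = SL₂(ℂ)/{±1}` (the quotient by the center). -/
abbrev PSL2C := Matrix.SpecialLinearGroup (Fin 2) ℂ ⧸
  Subgroup.center (Matrix.SpecialLinearGroup (Fin 2) ℂ)

/-- The upper unipotent subgroup `K = {[[1,a],[0,1]]} ⊆ PSL₂(ℂ)`. -/
def uniSubgroup : Subgroup PSL2C :=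
  Subgroup.closure {g | ∃ a : ℂ, g = (QuotientGroup.mk (uni a) : PSL2C)}

-- Auxiliary lemmas

abbrev SL2C := Matrix.SpecialLinearGroup (Fin 2) ℂ

lemma stmt2Op_ne {v : ℂ × ℂ} (w : ℂ × ℂ) (hv : v ≠ 0) : stmt2Op v w ≠ 0 := by
  intro h
  have h1 : v.1 * (1 + w.1 * w.2) - v.2 * w.1 ^ 2 = 0 := congrArg Prod.fst h
  have h2 : v.1 * w.2 ^ 2 + v.2 * (1 - w.1 * w.2) = 0 := congrArg Prod.snd h
  apply hv
  have e1 : v.1 = 0 := by linear_combination (1 - w.1*w.2) * h1 + w.1^2 * h2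
  have e2 : v.2 = 0 := by linear_combination (-w.2^2) * h1 + (1 + w.1*w.2) * h2
  exact Prod.ext e1 e2

lemma stmt2Op_neg_left (v w : ℂ × ℂ) : stmt2Op (-v) w = -stmt2Op v w := by
  unfold stmt2Op
  rw [Prod.ext_iff]
  constructor <;> simp <;> ring

lemma stmt2Op_neg_right (v w : ℂ × ℂ) : stmt2Op v (-w) = stmt2Op v w := by
  unfold stmt2Op
  rw [Prod.ext_iff]
  constructor <;> simp <;> ring

noncomputable def opXfun (v w : {p : ℂ × ℂ // p ≠ 0}) : Quot stmt2Rel :=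
  Quot.mk stmt2Rel ⟨stmt2Op v w, stmt2Op_ne _ v.2⟩

lemma opXfun_resp_left (v v' w : {p : ℂ × ℂ // p ≠ 0}) (h : stmt2Rel v v') :
    opXfun v w = opXfun v' w := by
  apply Quot.sound
  show (stmt2Op (v' : ℂ × ℂ) w : ℂ × ℂ) = -(stmt2Op (v : ℂ × ℂ) w)
  rw [h, stmt2Op_neg_left]

lemma opXfun_resp_right (v w w' : {p : ℂ × ℂ // p ≠ 0}) (h : stmt2Rel w w') :
    opXfun v w = opXfun v w' := by
  unfold opXfun
  congr 1
  apply Subtype.ext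
  show stmt2Op (v : ℂ × ℂ) w = stmt2Op (v : ℂ × ℂ) w'
  rw [show ((w' : ℂ × ℂ)) = -(w : ℂ × ℂ) from h, stmt2Op_neg_right]

noncomputable def opX : Quot stmt2Rel → Quot stmt2Rel → Quot stmt2Rel := fun x y =>
  Quot.lift (fun v => Quot.lift (fun w => opXfun v w) (fun w w' h => opXfun_resp_right v w w' h) y)
    (fun v v' h => by
      induction y using Quot.ind with
      | _ w => exact opXfun_resp_left v v' w h) x

lemma opX_mk (v w : {p : ℂ × ℂ // p ≠ 0}) :
    opX (Quot.mk _ v) (Quot.mk _ w) = Quot.mk stmt2Rel ⟨stmt2Op v w, stmt2Op_ne _ v.2⟩ := rfl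

-- uni lemmas
lemma uni_mul (a b : ℂ) : uni a * uni b = uni (a + b) := by
  apply Subtype.ext
  show (uni a : Matrix (Fin 2) (Fin 2) ℂ) * (uni b) = uni (a + b)
  ext i j
  fin_cases i <;> fin_cases j <;>
    simp [uni, Matrix.mul_apply, Fin.sum_univ_two] <;> ring

lemma uniK_commute {u : PSL2C} (hu : u ∈ uniSubgroup)
    (kk : PSL2C) (hk : ∃ a : ℂ, kk = (QuotientGroup.mk (uni a) : PSL2C)) : Commute u kk := by
  obtain ⟨b, rfl⟩ := hk
  induction hu using Subgroup.closure_induction with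
  | mem x hx =>
      obtain ⟨a, rfl⟩ := hx
      show _ = _
      rw [← QuotientGroup.mk_mul, ← QuotientGroup.mk_mul, uni_mul, uni_mul, add_comm]
  | one => exact Commute.one_left _
  | mul x y hx hy ihx ihy => exact ihx.mul_left ihy
  | inv x hx ih => exact ih.inv_left

-- opC
noncomputable def opC : Quotient (QuotientGroup.rightRel uniSubgroup) →
    Quotient (QuotientGroup.rightRel uniSubgroup) →
    Quotient (QuotientGroup.rightRel uniSubgroup) :=
  Quotient.lift₂
    (fun x y => Quotient.mk (QuotientGroup.rightRel uniSubgroup)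
      (x * y⁻¹ * (QuotientGroup.mk (uni 1) : PSL2C) * y))
    (by
      intro a b a' b' ha hb
      replace ha : a' * a⁻¹ ∈ uniSubgroup := QuotientGroup.rightRel_apply.mp ha
      replace hb : b' * b⁻¹ ∈ uniSubgroup := QuotientGroup.rightRel_apply.mp hb
      apply Quotient.sound
      apply QuotientGroup.rightRel_apply.mpr
      set k : PSL2C := (QuotientGroup.mk (uni 1) : PSL2C)
      have hcomm : (b' * b⁻¹) * k = k * (b' * b⁻¹) := uniK_commute hb k ⟨1, rfl⟩
      have : a' * b'⁻¹ * k * b' = (a' * a⁻¹) * (a * b⁻¹ * k * b) := by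
        have h2 : b'⁻¹ * k * b' = b⁻¹ * k * b := by
          have hk : (b' * b⁻¹)⁻¹ * (k * (b' * b⁻¹)) = k := by rw [← hcomm]; group
          calc b'⁻¹ * k * b' = b⁻¹ * ((b' * b⁻¹)⁻¹ * (k * (b' * b⁻¹))) * b := by group
            _ = b⁻¹ * k * b := by rw [hk]
        calc a' * b'⁻¹ * k * b' = a' * (b'⁻¹ * k * b') := by group
          _ = a' * (b⁻¹ * k * b) := by rw [h2]
          _ = (a' * a⁻¹) * (a * b⁻¹ * k * b) := by group
      have hfin : a' * b'⁻¹ * k * b' * (a * b⁻¹ * k * b)⁻¹ = a' * a⁻¹ := by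
        rw [this]; group
      rw [hfin]; exact ha)

lemma opC_mk (x y : PSL2C) :
    opC (Quotient.mk (QuotientGroup.rightRel uniSubgroup) x)
        (Quotient.mk (QuotientGroup.rightRel uniSubgroup) y) =
      Quotient.mk (QuotientGroup.rightRel uniSubgroup)
        (x * y⁻¹ * (QuotientGroup.mk (uni 1) : PSL2C) * y) := rfl

-- bottom row machinery
def btm (g : SL2C) : ℂ × ℂ :=
  ((g : Matrix (Fin 2) (Fin 2) ℂ) 1 0, (g : Matrix (Fin 2) (Fin 2) ℂ) 1 1)

lemma rowAct_btm (g : SL2C) :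
    rowAct ((0:ℂ),(1:ℂ)) (g : Matrix (Fin 2) (Fin 2) ℂ) = btm g := by
  simp [rowAct, btm]

lemma btm_ne (g : SL2C) : btm g ≠ 0 := by
  intro h
  have h1 : (g : Matrix (Fin 2) (Fin 2) ℂ) 1 0 = 0 := congrArg Prod.fst h
  have h2 : (g : Matrix (Fin 2) (Fin 2) ℂ) 1 1 = 0 := congrArg Prod.snd h
  have hd : det (g : Matrix (Fin 2) (Fin 2) ℂ) = 1 := g.2
  rw [Matrix.det_fin_two, h1, h2] at hd
  simp at hd

lemma rowAct_mul (v : ℂ × ℂ) (A B : Matrix (Fin 2) (Fin 2) ℂ) :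
    rowAct v (A * B) = rowAct (rowAct v A) B := by
  unfold rowAct
  rw [Prod.ext_iff]
  constructor <;> simp [Matrix.mul_apply, Fin.sum_univ_two] <;> ring

lemma rowAct_neg (v : ℂ × ℂ) (M : Matrix (Fin 2) (Fin 2) ℂ) :
    rowAct (-v) M = -(rowAct v M) := by
  unfold rowAct
  rw [Prod.ext_iff]
  constructor <;> simp <;> ring

lemma rowAct_one (v : ℂ × ℂ) : rowAct v (1 : Matrix (Fin 2) (Fin 2) ℂ) = v := by
  simp [rowAct, Matrix.one_apply]

lemma rowAct_negone (v : ℂ × ℂ) : rowAct v (-1 : Matrix (Fin 2) (Fin 2) ℂ) = -v := by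
  unfold rowAct
  rw [Prod.ext_iff]
  constructor <;> simp [Matrix.one_apply]

lemma btm_mul (g h : SL2C) : btm (g * h) = rowAct (btm g) (h : Matrix (Fin 2) (Fin 2) ℂ) := by
  rw [← rowAct_btm, Matrix.SpecialLinearGroup.coe_mul, rowAct_mul, rowAct_btm]

lemma btm_uni (a : ℂ) : btm (uni a) = ((0:ℂ), (1:ℂ)) := by
  simp [btm, uni]

lemma conj_uni (h : SL2C) :
    ((h⁻¹ * uni 1 * h : SL2C) : Matrix (Fin 2) (Fin 2) ℂ) =
      !![1 + (h : Matrix (Fin 2) (Fin 2) ℂ) 1 0 * (h : Matrix (Fin 2) (Fin 2) ℂ) 1 1,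
          (h : Matrix (Fin 2) (Fin 2) ℂ) 1 1 ^ 2;
         -(h : Matrix (Fin 2) (Fin 2) ℂ) 1 0 ^ 2,
          1 - (h : Matrix (Fin 2) (Fin 2) ℂ) 1 0 * (h : Matrix (Fin 2) (Fin 2) ℂ) 1 1] := by
  have hd : (h : Matrix (Fin 2) (Fin 2) ℂ) 0 0 * (h : Matrix (Fin 2) (Fin 2) ℂ) 1 1 -
      (h : Matrix (Fin 2) (Fin 2) ℂ) 0 1 * (h : Matrix (Fin 2) (Fin 2) ℂ) 1 0 = 1 := by
    have := h.2
    rwa [Matrix.det_fin_two] at this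
  rw [Matrix.SpecialLinearGroup.coe_mul, Matrix.SpecialLinearGroup.coe_mul]
  ext i j
  fin_cases i <;> fin_cases j <;>
    simp [Matrix.SpecialLinearGroup.coe_mul, Matrix.SpecialLinearGroup.coe_inv,
      Matrix.adjugate_fin_two, Matrix.mul_apply, Fin.sum_univ_two, uni] <;>
    first
      | linear_combination hd
      | ring
      | linear_combination -hd

lemma btm_conj (g h : SL2C) :
    btm (g * h⁻¹ * uni 1 * h) = stmt2Op (btm g) (btm h) := by
  rw [show g * h⁻¹ * uni 1 * h = g * (h⁻¹ * uni 1 * h) by group, btm_mul, conj_uni]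
  unfold rowAct stmt2Op btm
  rw [Prod.ext_iff]
  constructor <;> simp <;> ring

noncomputable def phi0 (g : SL2C) : Quot stmt2Rel := Quot.mk stmt2Rel ⟨btm g, btm_ne g⟩

lemma center_cases {z : SL2C} (hz : z ∈ Subgroup.center SL2C) :
    (z : Matrix (Fin 2) (Fin 2) ℂ) = 1 ∨ (z : Matrix (Fin 2) (Fin 2) ℂ) = -1 := by
  obtain ⟨r, hr, hrz⟩ := Matrix.SpecialLinearGroup.mem_center_iff.mp hz
  rw [Fintype.card_fin] at hr
  have h2 : (r - 1) * (r + 1) = 0 := by linear_combination hr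
  rcases mul_eq_zero.mp h2 with h | h
  · left
    rw [← hrz, sub_eq_zero.mp h]
    simp
  · right
    rw [← hrz, show r = -1 by linear_combination h]
    rw [map_neg, _root_.map_one]

lemma phi0_center (g z : SL2C) (hz : z ∈ Subgroup.center SL2C) : phi0 (g * z) = phi0 g := by
  rcases center_cases hz with h | h
  · unfold phi0
    congr 1
    apply Subtype.ext
    show btm (g * z) = btm g
    rw [btm_mul, h, rowAct_one]
  · apply Quot.sound
    show btm g = -(btm (g * z))
    rw [btm_mul, h, rowAct_negone, neg_neg]

noncomputable def phi1 : PSL2C → Quot stmt2Rel :=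
  Quotient.lift phi0 (fun a b hab => by
    have hz : a⁻¹ * b ∈ Subgroup.center SL2C := QuotientGroup.leftRel_apply.mp hab
    have hb : b = a * (a⁻¹ * b) := by group
    rw [hb]
    exact (phi0_center a _ hz).symm)

lemma phi1_mk (g : SL2C) : phi1 (QuotientGroup.mk g) = phi0 g := rfl

lemma phi1_uniK {u : PSL2C} (hu : u ∈ uniSubgroup) : ∀ x, phi1 (u * x) = phi1 x := by
  induction hu using Subgroup.closure_induction with
  | mem v hv =>
      intro x
      obtain ⟨a, rfl⟩ := hv
      obtain ⟨g, rfl⟩ := QuotientGroup.mk_surjective x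
      rw [← QuotientGroup.mk_mul, phi1_mk, phi1_mk]
      unfold phi0
      congr 1
      apply Subtype.ext
      show btm (uni a * g) = btm g
      rw [btm_mul, btm_uni, rowAct_btm]
  | one => intro x; rw [one_mul]
  | mul v w hv hw ihv ihw => intro x; rw [mul_assoc, ihv, ihw]
  | inv v hv ih =>
      intro x
      have h := ih (v⁻¹ * x)
      rw [show v * (v⁻¹ * x) = x by group] at h
      exact h.symm

noncomputable def phi : Quotient (QuotientGroup.rightRel uniSubgroup) → Quot stmt2Rel :=
  Quotient.lift phi1 (fun a b hab => by
    have hu : b * a⁻¹ ∈ uniSubgroup := QuotientGroup.rightRel_apply.mp hab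
    have hb : b = (b * a⁻¹) * a := by group
    rw [hb, phi1_uniK hu a])

lemma phi_mk (g : SL2C) :
    phi (Quotient.mk (QuotientGroup.rightRel uniSubgroup) (QuotientGroup.mk g)) = phi0 g := rfl

lemma eqvGen_stmt2Rel {a b : {p : ℂ × ℂ // p ≠ 0}} (h : Relation.EqvGen stmt2Rel a b) :
    (a : ℂ × ℂ) = b ∨ (a : ℂ × ℂ) = -(b : ℂ × ℂ) := by
  induction h with
  | rel x y hxy => right; rw [hxy, neg_neg]
  | refl x => left; rfl
  | symm x y hxy ih =>
      rcases ih with h | h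
      · left; exact h.symm
      · right; rw [h, neg_neg]
  | trans x y z hxy hyz ih1 ih2 =>
      rcases ih1 with h1 | h1 <;> rcases ih2 with h2 | h2
      · left; rw [h1, h2]
      · right; rw [h1, h2]
      · right; rw [h1, h2]
      · left; rw [h1, h2, neg_neg]

def negI : SL2C := ⟨(-1 : Matrix (Fin 2) (Fin 2) ℂ), by
  rw [show (-1 : Matrix (Fin 2) (Fin 2) ℂ) = -(1 : Matrix (Fin 2) (Fin 2) ℂ) from rfl,
    Matrix.det_neg]
  simp⟩

lemma negI_center : negI ∈ Subgroup.center SL2C := by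
  rw [Subgroup.mem_center_iff]
  intro g
  apply Subtype.ext
  show (g : Matrix (Fin 2) (Fin 2) ℂ) * (negI : Matrix (Fin 2) (Fin 2) ℂ) =
    (negI : Matrix (Fin 2) (Fin 2) ℂ) * g
  show (g : Matrix (Fin 2) (Fin 2) ℂ) * (-1) = (-1) * g
  rw [Matrix.mul_neg, Matrix.neg_mul, Matrix.mul_one, Matrix.one_mul]

lemma mem_uniSubgroup_of_btm_eq (m : SL2C) (h10 : (m : Matrix (Fin 2) (Fin 2) ℂ) 1 0 = 0)
    (h11 : (m : Matrix (Fin 2) (Fin 2) ℂ) 1 1 = 1) :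
    (QuotientGroup.mk m : PSL2C) ∈ uniSubgroup := by
  have hdet := m.2
  rw [Matrix.det_fin_two, h10, h11] at hdet
  have h00 : (m : Matrix (Fin 2) (Fin 2) ℂ) 0 0 = 1 := by linear_combination hdet
  have hm : m = uni ((m : Matrix (Fin 2) (Fin 2) ℂ) 0 1) := by
    apply Subtype.ext
    ext i j
    fin_cases i <;> fin_cases j <;> simp [uni, h10, h11, h00]
  rw [hm]
  exact Subgroup.subset_closure ⟨_, rfl⟩

lemma mem_uniSubgroup_of_btm_neg (m : SL2C) (h10 : (m : Matrix (Fin 2) (Fin 2) ℂ) 1 0 = 0)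
    (h11 : (m : Matrix (Fin 2) (Fin 2) ℂ) 1 1 = -1) :
    (QuotientGroup.mk m : PSL2C) ∈ uniSubgroup := by
  have hdet := m.2
  rw [Matrix.det_fin_two, h10, h11] at hdet
  have h00 : (m : Matrix (Fin 2) (Fin 2) ℂ) 0 0 = -1 := by linear_combination -hdet
  have hm : m = negI * uni (-((m : Matrix (Fin 2) (Fin 2) ℂ) 0 1)) := by
    apply Subtype.ext
    show (m : Matrix (Fin 2) (Fin 2) ℂ) = (negI : Matrix (Fin 2) (Fin 2) ℂ) * _
    show (m : Matrix (Fin 2) (Fin 2) ℂ) = (-1) * _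
    ext i j
    fin_cases i <;> fin_cases j <;>
      simp [uni, h10, h11, h00, Matrix.neg_mul, Matrix.mul_apply, Fin.sum_univ_two]
  rw [hm, QuotientGroup.mk_mul, QuotientGroup.eq_one_iff negI |>.mpr negI_center, one_mul]
  exact Subgroup.subset_closure ⟨_, rfl⟩

lemma phi_injective : Function.Injective phi := by
  intro u v huv
  induction u using Quotient.ind with | _ x =>
  induction v using Quotient.ind with | _ y =>
  obtain ⟨g, rfl⟩ := QuotientGroup.mk_surjective x
  obtain ⟨h, rfl⟩ := QuotientGroup.mk_surjective y
  rw [phi_mk, phi_mk] at huv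
  have hbtm := eqvGen_stmt2Rel (Quot.eq.mp huv)
  simp only at hbtm
  apply Quotient.sound
  apply QuotientGroup.rightRel_apply.mpr
  rw [← QuotientGroup.mk_inv, ← QuotientGroup.mk_mul]
  have hbm : btm (h * g⁻¹) = rowAct (btm h) ((g⁻¹ : SL2C) : Matrix (Fin 2) (Fin 2) ℂ) :=
    btm_mul h g⁻¹
  have hgg : rowAct (btm g) ((g⁻¹ : SL2C) : Matrix (Fin 2) (Fin 2) ℂ) = ((0:ℂ), (1:ℂ)) := by
    rw [← rowAct_btm, ← rowAct_mul, ← Matrix.SpecialLinearGroup.coe_mul, mul_inv_cancel]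
    exact rowAct_one _
  rcases hbtm with hb | hb
  · -- btm g = btm h
    have : btm (h * g⁻¹) = ((0:ℂ), (1:ℂ)) := by rw [hbm, ← hb, hgg]
    exact mem_uniSubgroup_of_btm_eq _ (congrArg Prod.fst this) (congrArg Prod.snd this)
  · -- btm g = -btm h
    have hb' : btm h = -(btm g) := by rw [hb, neg_neg]
    have : btm (h * g⁻¹) = -((0:ℂ), (1:ℂ)) := by rw [hbm, hb', rowAct_neg, hgg]
    have h10 : (((h * g⁻¹ : SL2C) : Matrix (Fin 2) (Fin 2) ℂ)) 1 0 = 0 := by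
      have := congrArg Prod.fst this; simpa [btm] using this
    have h11 : (((h * g⁻¹ : SL2C) : Matrix (Fin 2) (Fin 2) ℂ)) 1 1 = -1 := by
      have := congrArg Prod.snd this; simpa [btm] using this
    exact mem_uniSubgroup_of_btm_neg _ h10 h11

lemma phi_surjective : Function.Surjective phi := by
  intro q
  induction q using Quot.ind with | _ v =>
  obtain ⟨⟨a, b⟩, hv⟩ := v
  by_cases ha : a = 0
  · have hb : b ≠ 0 := by
      intro hb; exact hv (by rw [ha, hb]; rfl)
    refine ⟨Quotient.mk _ (QuotientGroup.mk
      (⟨!![b⁻¹, 0; a, b], by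
        rw [Matrix.det_fin_two_of, ha]; simp [inv_mul_cancel₀ hb]⟩ : SL2C)), ?_⟩
    refine (phi_mk _).trans ?_
    unfold phi0
    congr 1
  · refine ⟨Quotient.mk _ (QuotientGroup.mk
      (⟨!![0, -a⁻¹; a, b], by
        rw [Matrix.det_fin_two_of]; simp [inv_mul_cancel₀ ha]⟩ : SL2C)), ?_⟩
    refine (phi_mk _).trans ?_
    unfold phi0
    congr 1

lemma phi_compat (u v : Quotient (QuotientGroup.rightRel uniSubgroup)) :
    phi (opC u v) = opX (phi u) (phi v) := by
  induction u using Quotient.ind with | _ x =>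
  induction v using Quotient.ind with | _ y =>
  obtain ⟨g, rfl⟩ := QuotientGroup.mk_surjective x
  obtain ⟨h, rfl⟩ := QuotientGroup.mk_surjective y
  rw [opC_mk]
  rw [show (QuotientGroup.mk g : PSL2C) * (QuotientGroup.mk h)⁻¹ *
      (QuotientGroup.mk (uni 1)) * (QuotientGroup.mk h) =
      QuotientGroup.mk (g * h⁻¹ * uni 1 * h) by
    rw [← QuotientGroup.mk_inv, ← QuotientGroup.mk_mul, ← QuotientGroup.mk_mul,
      ← QuotientGroup.mk_mul]]
  rw [phi_mk, phi_mk, phi_mk]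
  unfold phi0
  rw [opX_mk]
  congr 1
  exact Subtype.ext (btm_conj g h)

/-- the quandle `X = (ℂ²∖{0})/±` with the matrix operation is
isomorphic to the coset quandle `K\PSL₂(ℂ)` with `[Kx] ◁ [Ky] = [K x y⁻¹ k y]`,
`k = [[1,1],[0,1]]`, via `K·g ↦ [(0,1)·g]`. -/
theorem stmt15 :
    ∃ hne : ∀ g : Matrix.SpecialLinearGroup (Fin 2) ℂ,
      rowAct ((0 : ℂ), (1 : ℂ)) (g : Matrix (Fin 2) (Fin 2) ℂ) ≠ 0,
    ∃ opX : Quot stmt2Rel → Quot stmt2Rel → Quot stmt2Rel,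
    ∃ opC : Quotient (QuotientGroup.rightRel uniSubgroup) →
        Quotient (QuotientGroup.rightRel uniSubgroup) →
        Quotient (QuotientGroup.rightRel uniSubgroup),
    ∃ φ : Quotient (QuotientGroup.rightRel uniSubgroup) → Quot stmt2Rel,
      (∀ (v w : ℂ × ℂ) (hv : v ≠ 0) (hw : w ≠ 0), ∃ hvw : stmt2Op v w ≠ 0,
        opX (Quot.mk stmt2Rel ⟨v, hv⟩) (Quot.mk stmt2Rel ⟨w, hw⟩) =
          Quot.mk stmt2Rel ⟨stmt2Op v w, hvw⟩) ∧
      (∀ x y : PSL2C,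
        opC (Quotient.mk (QuotientGroup.rightRel uniSubgroup) x)
            (Quotient.mk (QuotientGroup.rightRel uniSubgroup) y) =
          Quotient.mk (QuotientGroup.rightRel uniSubgroup)
            (x * y⁻¹ * (QuotientGroup.mk (uni 1) : PSL2C) * y)) ∧
      Function.Bijective φ ∧
      (∀ g : Matrix.SpecialLinearGroup (Fin 2) ℂ,
        φ (Quotient.mk (QuotientGroup.rightRel uniSubgroup) (QuotientGroup.mk g)) =
          Quot.mk stmt2Rel ⟨rowAct ((0 : ℂ), (1 : ℂ)) (g : Matrix (Fin 2) (Fin 2) ℂ), hne g⟩) ∧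
      (∀ u v, φ (opC u v) = opX (φ u) (φ v)) := by
  refine ⟨fun g => by rw [rowAct_btm]; exact btm_ne g, opX, opC, phi, ?_, ?_,
    ⟨phi_injective, phi_surjective⟩, ?_, phi_compat⟩
  · intro v w hv hw
    exact ⟨stmt2Op_ne w hv, rfl⟩
  · intro x y
    exact opC_mk x y
  · intro g
    rw [phi_mk]
    unfold phi0
    congr 1
    exact Subtype.ext (rowAct_btm g).symm
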